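/- Let q be a prime power, t ≥ 1, k > t, and let 𝒫 be a non-trivial vector space t-partition of 𝔽_q^v containing no elements of dimension i for any t < i < k. Then the set 𝒩 of t-dimensional elements of 𝒫 is q^{k−t}-divisible, i.e., #𝒩 ≡ #{N ∈ 𝒩 : N ≤ H} (mod q^{k−t}) for every hyperplane H of 𝔽_q^v. -/

import Mathlib

/-!
Fix a hyperplane `H` and, for a subspace `W ⊄ H`, group the `t`-subspaces `T ≤ W` with
`T ⊄ H` according to `S = T ∩ H`. The map `x ↦ S + ⟨x⟩` sends `W \ H` onto the subspaces with
a given `S`, with fibres `T \ S` of size `q^t - q^(t-1)`, so there are exactly `q^(dim W - t)`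
of them. Now count the `t`-subspaces not in `H` through the unique element of `𝒫` containing
each: the total and the contribution of every element of dimension at least `k` are multiples
of `q^(k-t)`, while each `t`-dimensional element `N` contributes `1` if `N ⊄ H` and `0`
otherwise.
-/

open Module

/-- A vector space `t`-partition of `F^v`. -/
def IsVSPartition {F : Type} [Field F] {v : ℕ} (t : ℕ)
    (P : Set (Submodule F (Fin v → F))) : Prop :=
  (∀ U ∈ P, t ≤ finrank F U) ∧
  ∀ T : Submodule F (Fin v → F), finrank F T = t → ∃! U, U ∈ P ∧ T ≤ U

/-- A set `N` of subspaces of `F^v` is `m`-divisible if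
`#N ≡ #{X ∈ N : X ≤ H} (mod m)` for every hyperplane `H` of `F^v`. -/
def IsModDivisible {F : Type} [Field F] {v : ℕ} (m : ℕ)
    (N : Set (Submodule F (Fin v → F))) : Prop :=
  ∀ H : Submodule F (Fin v → F), finrank F H = v - 1 →
    N.ncard ≡ {X ∈ N | X ≤ H}.ncard [MOD m]

open Finset Submodule
open scoped Classical

section

variable {F V : Type*} [Field F] [AddCommGroup V] [Module F V]

theorem Submodule.finrank_inf_add_one_of_not_le [FiniteDimensional F V] {A W H : Submodule F V}
    (hAW : A ≤ W) (hWH : finrank F ↥(W ⊓ H) + 1 = finrank F W) (hA : ¬ A ≤ H) :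
    finrank F ↥(A ⊓ H) + 1 = finrank F A := by
  have hlt := finrank_lt_finrank_of_lt (right_lt_sup.2 fun h => hA (h.trans inf_le_right) :
    W ⊓ H < A ⊔ W ⊓ H)
  have hle := finrank_mono (sup_le hAW inf_le_left : A ⊔ W ⊓ H ≤ W)
  have hmod := finrank_sup_add_finrank_inf_eq A (W ⊓ H)
  rw [← inf_assoc, inf_eq_left.2 hAW] at hmod
  omega

theorem Submodule.finrank_add_one_of_ne_top [FiniteDimensional F V] {H : Submodule F V}
    (hH : finrank F H = finrank F V - 1) (h : H ≠ ⊤) : finrank F H + 1 = finrank F V := by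
  have := finrank_lt h
  omega

variable [Fintype V]

noncomputable def subspacesNotLE (t : ℕ) (W H : Submodule F V) : Finset (Submodule F V) :=
  {T | finrank F T = t ∧ T ≤ W ∧ ¬ T ≤ H}

variable {t : ℕ} {W H S T : Submodule F V}

theorem mem_subspacesNotLE : T ∈ subspacesNotLE t W H ↔ finrank F T = t ∧ T ≤ W ∧ ¬ T ≤ H := by
  simp [subspacesNotLE]

theorem sup_span_singleton_mem_subspacesNotLE (hS : S ≤ W ⊓ H) (hSt : finrank F S + 1 = t)
    {x : V} (hxW : x ∈ W) (hxH : x ∉ H) :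
    S ⊔ F ∙ x ∈ (subspacesNotLE t W H).filter (· ⊓ H = S) := by
  have hxS : x ∉ S := fun h => hxH (hS h).2
  have hx : x ∈ S ⊔ F ∙ x := mem_sup_right (mem_span_singleton_self x)
  rw [mem_filter, mem_subspacesNotLE, finrank_sup_span_singleton hxS,
    sup_inf_assoc_of_le _ (hS.trans inf_le_right), inf_comm,
    (disjoint_span_singleton_of_notMem hxH).eq_bot, sup_bot_eq]
  exact ⟨⟨hSt, sup_le (hS.trans inf_le_left) ((span_singleton_le_iff_mem _ _).2 hxW),
    fun h => hxH (h hx)⟩, rfl⟩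

theorem sup_span_singleton_eq_iff (hT : T ∈ subspacesNotLE t W H) (hTS : T ⊓ H = S)
    (hSt : finrank F S + 1 = t) {x : V} :
    ((x ∈ W ∧ x ∉ H) ∧ S ⊔ F ∙ x = T) ↔ x ∈ T ∧ x ∉ S := by
  obtain ⟨hTt, hTW, -⟩ := mem_subspacesNotLE.1 hT
  subst hTS
  constructor
  · rintro ⟨⟨-, hxH⟩, hxT⟩
    exact ⟨hxT ▸ mem_sup_right (mem_span_singleton_self x), fun h => hxH h.2⟩
  · rintro ⟨hxT, hxS⟩
    have hxH : x ∉ H := fun h => hxS ⟨hxT, h⟩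
    refine ⟨⟨hTW hxT, hxH⟩, eq_of_le_of_finrank_eq
      (sup_le inf_le_left ((span_singleton_le_iff_mem _ _).2 hxT)) ?_⟩
    rw [finrank_sup_span_singleton hxS, hSt, hTt]

theorem subspacesNotLE_eq_empty_of_le (hWH : W ≤ H) : subspacesNotLE t W H = ∅ :=
  eq_empty_of_forall_notMem fun _ hT =>
    (mem_subspacesNotLE.1 hT).2.2 ((mem_subspacesNotLE.1 hT).2.1.trans hWH)

theorem sum_card_subspacesNotLE_of_finrank_eq {s : Finset (Submodule F V)}
    (hs : ∀ U ∈ s, finrank F U = t) : ∑ U ∈ s, #(subspacesNotLE t U H) = #{U ∈ s | ¬ U ≤ H} := by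
  rw [card_filter]
  refine sum_congr rfl fun U hU => ?_
  split_ifs with hUH
  · rw [subspacesNotLE_eq_empty_of_le hUH, card_empty]
  · rw [card_eq_one]
    refine ⟨U, eq_singleton_iff_unique_mem.2 ⟨mem_subspacesNotLE.2 ⟨hs U hU, le_rfl, hUH⟩,
      fun T hT => ?_⟩⟩
    obtain ⟨hTt, hTU, -⟩ := mem_subspacesNotLE.1 hT
    exact eq_of_le_of_finrank_eq hTU (hTt.trans (hs U hU).symm)

variable [Fintype F]

local notation "q" => Fintype.card F

theorem card_filter_mem_sdiff (hST : S ≤ T) :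
    #{x | x ∈ T ∧ x ∉ S} = q ^ finrank F T - q ^ finrank F S := by
  have hcard (W : Submodule F V) : #{x | x ∈ W} = q ^ finrank F W := by
    rw [← Fintype.card_subtype, ← card_eq_pow_finrank]
  rw [← hcard T, ← hcard S, ← card_filter_add_card_filter_not (s := {x | x ∈ T}) (· ∈ S),
    filter_filter, filter_filter]
  simp only [and_iff_right_of_imp (@hST _)]
  exact (Nat.add_sub_cancel_left ..).symm

theorem card_filter_inf_eq_subspacesNotLE (hWH : finrank F ↥(W ⊓ H) + 1 = finrank F W)
    (hS : S ≤ W ⊓ H) (hSt : finrank F S + 1 = t) :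
    #((subspacesNotLE t W H).filter (· ⊓ H = S)) = q ^ (finrank F W - t) := by
  have hcount := card_eq_sum_card_fiberwise (s := {x | x ∈ W ∧ x ∉ H}) (f := fun x => S ⊔ F ∙ x)
    fun x hx => sup_span_singleton_mem_subspacesNotLE hS hSt (mem_filter.1 hx).2.1
      (mem_filter.1 hx).2.2
  subst hSt
  set s := finrank F S
  set d := finrank F W
  have hsd : s + 1 ≤ d := by have := finrank_mono hS; omega
  have hfiber : ∀ T ∈ (subspacesNotLE (s + 1) W H).filter (· ⊓ H = S),
      #{x ∈ ({x | x ∈ W ∧ x ∉ H} : Finset V) | S ⊔ F ∙ x = T} = q ^ (s + 1) - q ^ s := by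
    intro T hT
    rw [mem_filter] at hT
    rw [filter_filter, filter_congr fun x _ => sup_span_singleton_eq_iff hT.1 hT.2 rfl,
      card_filter_mem_sdiff (hT.2 ▸ inf_le_left), mem_subspacesNotLE.1 hT.1 |>.1]
  have hvectors : #{x | x ∈ W ∧ x ∉ H} = q ^ (d - (s + 1)) * (q ^ (s + 1) - q ^ s) := by
    rw [show ({x | x ∈ W ∧ x ∉ H} : Finset V) = ({x | x ∈ W ∧ x ∉ W ⊓ H} : Finset V) from
        filter_congr fun x _ => and_congr_right fun hx => not_congr (and_iff_right hx).symm,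
      card_filter_mem_sdiff inf_le_left, Nat.mul_sub, ← pow_add, ← pow_add]
    congr 2 <;> omega
  rw [sum_congr rfl hfiber, sum_const, smul_eq_mul, hvectors] at hcount
  have hq : q ^ s < q ^ (s + 1) := Nat.pow_lt_pow_right Fintype.one_lt_card (by omega)
  exact (Nat.eq_of_mul_eq_mul_right (by omega) hcount).symm

theorem card_subspacesNotLE (hWH : finrank F ↥(W ⊓ H) + 1 = finrank F W) :
    #(subspacesNotLE t W H) =
      #{S : Submodule F V | finrank F S + 1 = t ∧ S ≤ W ⊓ H} * q ^ (finrank F W - t) := by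
  rw [card_eq_sum_card_fiberwise (f := (· ⊓ H))
    (t := {S : Submodule F V | finrank F S + 1 = t ∧ S ≤ W ⊓ H}), ← smul_eq_mul, ← sum_const]
  · refine sum_congr rfl fun S hS => ?_
    obtain ⟨hSt, hSWH⟩ := (mem_filter.1 hS).2
    exact card_filter_inf_eq_subspacesNotLE hWH hSWH hSt
  · intro T hT
    obtain ⟨hTt, hTW, hTH⟩ := mem_subspacesNotLE.1 hT
    simp only [coe_filter, mem_univ, true_and, Set.mem_ofPred_eq]
    exact ⟨hTt ▸ finrank_inf_add_one_of_not_le hTW hWH hTH, inf_le_inf_right H hTW⟩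

theorem pow_dvd_card_subspacesNotLE (hH : finrank F H = finrank F V - 1) (t : ℕ)
    (W : Submodule F V) : q ^ (finrank F W - t) ∣ #(subspacesNotLE t W H) := by
  by_cases hWH : W ≤ H
  · rw [subspacesNotLE_eq_empty_of_le hWH, card_empty]
    exact dvd_zero _
  · have hH' := finrank_add_one_of_ne_top hH fun h => hWH (h ▸ le_top)
    rw [card_subspacesNotLE
      (finrank_inf_add_one_of_not_le le_top (by rwa [top_inf_eq, finrank_top]) hWH)]
    exact dvd_mul_left _ _

end

theorem IsVSPartition.card_subspacesNotLE_top {F : Type} [Field F] [Fintype F] {v t : ℕ}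
    {P : Set (Submodule F (Fin v → F))} (hP : IsVSPartition t P) (H : Submodule F (Fin v → F)) :
    #(subspacesNotLE t ⊤ H) = ∑ U ∈ P.toFinset, #(subspacesNotLE t U H) := by
  rw [← card_biUnion]
  · congr 1
    ext T
    simp only [mem_biUnion, Set.mem_toFinset, mem_subspacesNotLE, le_top, true_and]
    constructor
    · rintro ⟨hTt, hTH⟩
      obtain ⟨U, ⟨hUP, hTU⟩, -⟩ := hP.2 T hTt
      exact ⟨U, hUP, hTt, hTU, hTH⟩
    · rintro ⟨U, -, hTt, -, hTH⟩
      exact ⟨hTt, hTH⟩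
  · intro U hU U' hU' hne
    refine disjoint_left.2 fun T hT hT' => hne ?_
    obtain ⟨hTt, hTU, -⟩ := mem_subspacesNotLE.1 hT
    exact (hP.2 T hTt).unique ⟨Set.mem_toFinset.1 hU, hTU⟩
      ⟨Set.mem_toFinset.1 hU', (mem_subspacesNotLE.1 hT').2.1⟩

theorem IsVSPartition.pow_dvd_card_not_le {F : Type} [Field F] [Fintype F] {v t k : ℕ}
    {P : Set (Submodule F (Fin v → F))} (hP : IsVSPartition t P) {H : Submodule F (Fin v → F)}
    (hH : finrank F H = v - 1) (hkv : k ≤ v) (hdim : ∀ U ∈ P, finrank F U ≠ t → k ≤ finrank F U) :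
    Fintype.card F ^ (k - t) ∣
      #{U ∈ P.toFinset | finrank F (U : Submodule F (Fin v → F)) = t ∧ ¬ U ≤ H} := by
  replace hH : finrank F H = finrank F (Fin v → F) - 1 := by rwa [finrank_fin_fun]
  have hrest : Fintype.card F ^ (k - t) ∣
      ∑ U ∈ P.toFinset.filter fun U : Submodule F (Fin v → F) => ¬ finrank F U = t,
        #(subspacesNotLE t U H) :=
    dvd_sum fun U hU => (pow_dvd_pow _ (Nat.sub_le_sub_right (hdim U
      (Set.mem_toFinset.1 (mem_filter.1 hU).1) (mem_filter.1 hU).2) t)).trans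
      (pow_dvd_card_subspacesNotLE hH t U)
  have htop := pow_dvd_card_subspacesNotLE hH t ⊤
  rw [finrank_top, finrank_fin_fun, hP.card_subspacesNotLE_top,
    ← sum_filter_add_sum_filter_not _ fun U : Submodule F (Fin v → F) => finrank F U = t,
    sum_card_subspacesNotLE_of_finrank_eq fun U hU => (mem_filter.1 hU).2, filter_filter] at htop
  exact (Nat.dvd_add_left hrest).1 ((pow_dvd_pow _ (Nat.sub_le_sub_right hkv t)).trans htop)

theorem holes_divisible_general (q v t k : ℕ)
    (F : Type) [Field F] [Fintype F] (hq : Fintype.card F = q)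
    (P : Set (Submodule F (Fin v → F))) (hP : IsVSPartition t P)
    (hnt : ¬ ∀ U ∈ P, finrank F U = t ∨ finrank F U = v)
    (hgap : ∀ U ∈ P, ∀ i : ℕ, t < i → i < k → finrank F U ≠ i) :
    IsModDivisible (q ^ (k - t)) {N ∈ P | finrank F N = t} := by
  intro H hH
  subst hq
  have hdim : ∀ U ∈ P, finrank F U ≠ t → k ≤ finrank F U := fun U hUP hUt =>
    not_lt.1 fun hlt => hgap U hUP _ ((hP.1 U hUP).lt_of_ne' hUt) hlt rfl
  have hkv : k ≤ v := by
    push Not at hnt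
    obtain ⟨U, hUP, hUt, -⟩ := hnt
    simpa using (hdim U hUP hUt).trans (finrank_le U)
  have hdiff : ({N ∈ P | finrank F N = t} \ {X | X ≤ H}).ncard =
      #{U ∈ P.toFinset | finrank F (U : Submodule F (Fin v → F)) = t ∧ ¬ U ≤ H} := by
    rw [← Set.ncard_coe_finset]
    congr 1
    ext U
    simp only [coe_filter, Set.mem_toFinset, Set.mem_sdiff, Set.mem_ofPred_eq, and_assoc]
  rw [← Set.ncard_inter_add_ncard_sdiff_eq_ncard _ {X | X ≤ H}, hdiff]
  exact (Nat.modEq_zero_iff_dvd.2 (hP.pow_dvd_card_not_le hH hkv hdim)).add_left _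

/-- The set of `t`-dimensional elements of a non-trivial vector space `t`-partition
whose second smallest occurring dimension is at least `k` is `q^(k−t)`-divisible. -/
theorem holes_divisible (q v t k : ℕ) (ht : 1 ≤ t) (hk : t < k)
    (F : Type) [Field F] [Fintype F] (hq : Fintype.card F = q)
    (P : Set (Submodule F (Fin v → F))) (hP : IsVSPartition t P)
    (hnt : ¬ ∀ U ∈ P, finrank F U = t ∨ finrank F U = v)
    (hgap : ∀ U ∈ P, ∀ i : ℕ, t < i → i < k → finrank F U ≠ i) :
    IsModDivisible (q ^ (k - t)) {N ∈ P | finrank F N = t} :=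
  holes_divisible_general q v t k F hq P hP hnt hgap
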